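/- arXiv:2004.08733 — 4 statements merged into one kernel-verified Lean document; each statement's English description precedes it below -/
import Mathlib

section
/- Let (b_i, c_i)_{i=1}^s be a quadrature rule on [0,1] that integrates exactly all real polynomials of degree ≤ 2s-1, i.e., ∑_{i=1}^s b_i p(c_i) = ∫₀¹ p(x) dx for all such p. If v : ℝ → ℝ is a polynomial of degree ≤ s satisfying v(c_i)·v'(c_i) = 0 for i = 1,…,s, then v(1)² = v(0)². -/
theorem stmt_7 (s : ℕ) (hs : 1 ≤ s) (b c : Fin s → ℝ)
    (hquad : ∀ p : Polynomial ℝ, p.natDegree ≤ 2 * s - 1 →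
      ∑ i, b i * p.eval (c i) = ∫ x in (0:ℝ)..1, p.eval x)
    (v : Polynomial ℝ) (hv : v.natDegree ≤ s)
    (hnode : ∀ i, v.eval (c i) * (Polynomial.derivative v).eval (c i) = 0) :
    v.eval 1 ^ 2 = v.eval 0 ^ 2 := by
  obtain ⟨p, hp⟩ : ∃ p, p = v * Polynomial.derivative v := ⟨_, rfl⟩
  have hdeg : p.natDegree ≤ 2 * s - 1 := by
    rw [hp]
    calc (v * Polynomial.derivative v).natDegree
        ≤ v.natDegree + (Polynomial.derivative v).natDegree :=
          Polynomial.natDegree_mul_le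
      _ ≤ s + (s - 1) := by
          gcongr
          exact (Polynomial.natDegree_derivative_le v).trans (by omega)
      _ ≤ 2 * s - 1 := by omega
  have hsum : ∑ i, b i * p.eval (c i) = 0 := by
    apply Finset.sum_eq_zero
    intro i _
    simp [hp, hnode i]
  have hint : (∫ x in (0:ℝ)..1, p.eval x) = (v.eval 1 ^ 2 - v.eval 0 ^ 2) / 2 := by
    have hd2 : (deriv fun x => v.eval x ^ 2) = fun x => 2 * p.eval x := by
      funext x
      have h : HasDerivAt (fun x => v.eval x ^ 2) _ x := (v.hasDerivAt x).pow 2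
      rw [h.deriv, hp]
      simp [Polynomial.eval_mul]; ring
    have h2 : (∫ x in (0:ℝ)..1, 2 * p.eval x) = v.eval 1 ^ 2 - v.eval 0 ^ 2 := by
      have H := intervalIntegral.integral_deriv_eq_sub
        (f := fun x => v.eval x ^ 2) (a := (0:ℝ)) (b := 1)
        (fun x _ => ((v.differentiable).differentiableAt).pow 2)
        (by rw [hd2]
            exact Continuous.intervalIntegrable (continuous_const.mul p.continuous) 0 1)
      rw [hd2] at H; simpa using H
    rw [intervalIntegral.integral_const_mul] at h2
    linarith
  have h := hquad p hdeg
  rw [hsum, hint] at h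
  linarith
end

section
/- Let (b_i, c_i)_{i=1}^s be a quadrature rule on [0,1] exact for all polynomials of degree ≤ 2s-1, H a complex inner product space (finite-dimensional), L : H → H ℂ-linear and self-adjoint, and u : ℝ → H a polynomial curve of degree ≤ s. If Re⟨u'(c_i), L u(c_i)⟩ = 0 for i = 1,…,s, then Re⟨L u(1), u(1)⟩ = Re⟨L u(0), u(0)⟩. -/
/-!
The quadratic form `q(t) = Re ⟪L u(t), u(t)⟫` of a curve `u` of degree `≤ s` is a real polynomial of
degree `≤ 2s`, and by self-adjointness of `L` its derivative is `q'(t) = 2 Re ⟪u'(t), L u(t)⟫`.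
Since `q'` has degree `≤ 2s - 1`, the quadrature rule integrates it exactly, so
`q(1) - q(0) = ∑ bᵢ q'(cᵢ)`, which vanishes because `q'` vanishes at every node.
-/

open scoped InnerProductSpace
open Polynomial

theorem Polynomial.eval_one_sub_eval_zero_eq_sum_mul_eval_derivative {ι : Type*} [Fintype ι]
    {m : ℕ} (b c : ι → ℝ)
    (hquad : ∀ p : ℝ[X], p.natDegree ≤ m → ∑ i, b i * p.eval (c i) = ∫ x in (0:ℝ)..1, p.eval x)
    {p : ℝ[X]} (hp : p.natDegree ≤ m + 1) :
    p.eval 1 - p.eval 0 = ∑ i, b i * p.derivative.eval (c i) := by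
  have hdeg : p.derivative.natDegree ≤ m :=
    (natDegree_derivative_le p).trans (by omega)
  rw [hquad _ hdeg, intervalIntegral.integral_eq_sub_of_hasDerivAt (fun x _ => p.hasDerivAt x)
    ((Polynomial.continuous _).intervalIntegrable _ _)]

section PolynomialCurve

variable {E F : Type*} [NormedAddCommGroup E] [NormedSpace ℝ E]
  [NormedAddCommGroup F] [NormedSpace ℝ F] {n : ℕ}

theorem hasDerivAt_sum_pow_smul (a : Fin n → E) (t : ℝ) :
    HasDerivAt (fun t : ℝ => ∑ i : Fin n, t ^ (i : ℕ) • a i)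
      (∑ i : Fin n, ((i : ℕ) * t ^ ((i : ℕ) - 1)) • a i) t :=
  HasDerivAt.fun_sum fun i _ => by simpa using (hasDerivAt_pow (i : ℕ) t).smul_const (a i)

theorem LinearMap.hasDerivAt_map_sum_pow_smul (f : E →ₗ[ℝ] F) (a : Fin n → E) (t : ℝ) :
    HasDerivAt (fun t : ℝ => f (∑ i : Fin n, t ^ (i : ℕ) • a i))
      (f (∑ i : Fin n, ((i : ℕ) * t ^ ((i : ℕ) - 1)) • a i)) t := by
  simpa only [map_sum, map_smul, Function.comp_apply] using hasDerivAt_sum_pow_smul (f ∘ a) t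

end PolynomialCurve

section ComplexInnerProductSpace

variable {H : Type*} [NormedAddCommGroup H] [InnerProductSpace ℂ H]

theorem exists_eval_eq_re_inner_sum_pow_smul {m n : ℕ} (x : Fin (m + 1) → H)
    (y : Fin (n + 1) → H) :
    ∃ p : ℝ[X], p.natDegree ≤ m + n ∧ ∀ t : ℝ, p.eval t =
      (⟪∑ i : Fin (m + 1), t ^ (i : ℕ) • x i, ∑ j : Fin (n + 1), t ^ (j : ℕ) • y j⟫_ℂ).re := by
  refine ⟨∑ i, ∑ j, C (⟪x i, y j⟫_ℂ).re * X ^ ((i : ℕ) + j), ?_, fun t => ?_⟩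
  · refine natDegree_sum_le_of_forall_le _ _ fun i _ => natDegree_sum_le_of_forall_le _ _
      fun j _ => (natDegree_C_mul_X_pow_le _ _).trans ?_
    have := i.is_le
    have := j.is_le
    omega
  · rw [sum_inner]
    simp only [eval_finsetSum, eval_mul, eval_C, eval_pow, eval_X, inner_sum, Complex.re_sum,
      ← Complex.coe_smul, inner_smul_left, inner_smul_right, Complex.conj_ofReal,
      Complex.re_ofReal_mul]
    exact Finset.sum_congr rfl fun i _ => Finset.sum_congr rfl fun j _ => by ring

theorem LinearMap.IsSymmetric.hasDerivAt_re_inner_apply_self {L : H →ₗ[ℂ] H}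
    (hL : L.IsSymmetric) {u : ℝ → H} {u' : H} {t : ℝ} (hu : HasDerivAt u u' t)
    (hLu : HasDerivAt (fun t => L (u t)) (L u') t) :
    HasDerivAt (fun t => (⟪L (u t), u t⟫_ℂ).re) (2 * (⟪u', L (u t)⟫_ℂ).re) t := by
  have hre := Complex.reCLM.hasFDerivAt.comp_hasDerivAt t (hLu.inner ℂ hu)
  have hsum : (⟪L (u t), u'⟫_ℂ + ⟪L u', u t⟫_ℂ).re = 2 * (⟪u', L (u t)⟫_ℂ).re := by
    rw [Complex.add_re, hL u', ← inner_conj_symm (L (u t)) u', Complex.conj_re]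
    ring
  simpa only [Function.comp_def, Complex.reCLM_apply, hsum] using hre

end ComplexInnerProductSpace

theorem stmt_8_general {H : Type*} [NormedAddCommGroup H] [InnerProductSpace ℂ H]
    (s : ℕ) (b c : Fin s → ℝ)
    (hquad : ∀ p : Polynomial ℝ, p.natDegree ≤ 2 * s - 1 →
      ∑ i, b i * p.eval (c i) = ∫ x in (0:ℝ)..1, p.eval x)
    (L : H →ₗ[ℂ] H) (hL : ∀ u v : H, ⟪L u, v⟫_ℂ = ⟪u, L v⟫_ℂ)
    (a : Fin (s + 1) → H) (u : ℝ → H)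
    (hu : ∀ t : ℝ, u t = ∑ i : Fin (s + 1), (t ^ (i : ℕ)) • a i)
    (hnode : ∀ i, (⟪deriv u (c i), L (u (c i))⟫_ℂ).re = 0) :
    (⟪L (u 1), u 1⟫_ℂ).re = (⟪L (u 0), u 0⟫_ℂ).re := by
  set u' : ℝ → H := fun t => ∑ i : Fin (s + 1), ((i : ℕ) * t ^ ((i : ℕ) - 1)) • a i
  have hderiv (t : ℝ) : HasDerivAt u (u' t) t := funext hu ▸ hasDerivAt_sum_pow_smul a t
  have hderiv_L (t : ℝ) : HasDerivAt (fun t => L (u t)) (L (u' t)) t :=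
    funext hu ▸ (L.restrictScalars ℝ).hasDerivAt_map_sum_pow_smul a t
  obtain ⟨q, hq_deg, hq⟩ := exists_eval_eq_re_inner_sum_pow_smul (fun i => L (a i)) a
  simp only [← LinearMap.map_smul_of_tower, ← map_sum, ← hu] at hq
  have hq' (t : ℝ) : q.derivative.eval t = 2 * (⟪u' t, L (u t)⟫_ℂ).re :=
    (q.hasDerivAt t).unique <| funext hq ▸
      LinearMap.IsSymmetric.hasDerivAt_re_inner_apply_self hL (hderiv t) (hderiv_L t)
  have hq_quad := q.eval_one_sub_eval_zero_eq_sum_mul_eval_derivative b c hquad (by omega)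
  simp only [hq', ← (hderiv _).deriv, hnode, mul_zero, Finset.sum_const_zero, hq] at hq_quad
  linarith

theorem stmt_8 {H : Type*} [NormedAddCommGroup H] [InnerProductSpace ℂ H]
    [FiniteDimensional ℂ H]
    (s : ℕ) (hs : 1 ≤ s) (b c : Fin s → ℝ)
    (hquad : ∀ p : Polynomial ℝ, p.natDegree ≤ 2 * s - 1 →
      ∑ i, b i * p.eval (c i) = ∫ x in (0:ℝ)..1, p.eval x)
    (L : H →ₗ[ℂ] H) (hL : ∀ u v : H, ⟪L u, v⟫_ℂ = ⟪u, L v⟫_ℂ)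
    (a : Fin (s + 1) → H) (u : ℝ → H)
    (hu : ∀ t : ℝ, u t = ∑ i : Fin (s + 1), (t ^ (i : ℕ)) • a i)
    (hnode : ∀ i, (⟪deriv u (c i), L (u (c i))⟫_ℂ).re = 0) :
    (⟪L (u 1), u 1⟫_ℂ).re = (⟪L (u 0), u 0⟫_ℂ).re :=
  stmt_8_general s b c hquad L hL a u hu hnode
end

section
/- Let (b_i, c_i)_{i=1}^s be a quadrature rule on [0,1] exact for polynomials of degree ≤ 2s-1, H a finite-dimensional complex inner product space, and u : ℝ → H a polynomial of degree ≤ s. If for each i there exists F_i ∈ H with u'(c_i) = -i F_i and Im⟨F_i, u(c_i)⟩ = 0, then ‖u(1)‖² = ‖u(0)‖². -/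
open scoped InnerProductSpace
open Polynomial

/-!
The function `t ↦ ‖u t‖²` is a real polynomial of degree `≤ 2s`, so its derivative has degree
`≤ 2s - 1` and is integrated exactly by the quadrature rule. At each node this derivative is
`2 Re⟪u(cᵢ), u'(cᵢ)⟫ = 2 Re⟪u(cᵢ), -i Fᵢ⟫ = -2 Im⟪Fᵢ, u(cᵢ)⟫ = 0`, hence
`‖u 1‖² - ‖u 0‖² = ∫₀¹ (‖u‖²)' = ∑ bᵢ · 0 = 0`.
-/

theorem Polynomial.eval_one_eq_eval_zero_of_quadrature {s : ℕ} {b c : Fin s → ℝ}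
    (hquad : ∀ p : ℝ[X], p.natDegree ≤ 2 * s - 1 →
      ∑ i, b i * p.eval (c i) = ∫ x in (0:ℝ)..1, p.eval x)
    {P : ℝ[X]} (hP : P.natDegree ≤ 2 * s) (hnodes : ∀ i, P.derivative.eval (c i) = 0) :
    P.eval 1 = P.eval 0 := by
  have hdeg : P.derivative.natDegree ≤ 2 * s - 1 :=
    (natDegree_derivative_le P).trans (Nat.sub_le_sub_right hP 1)
  have hftc : ∫ x in (0:ℝ)..1, P.derivative.eval x = P.eval 1 - P.eval 0 :=
    intervalIntegral.integral_eq_sub_of_hasDerivAt (fun x _ => P.hasDerivAt x)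
      ((Polynomial.continuous _).intervalIntegrable _ _)
  have := hquad _ hdeg
  simp only [hnodes, mul_zero, Finset.sum_const_zero, hftc] at this
  linarith

section InnerProduct

variable {H : Type*} [NormedAddCommGroup H] [InnerProductSpace ℂ H]

theorem HasDerivAt.norm_sq_of_complex {f : ℝ → H} {f' : H} {x : ℝ} (hf : HasDerivAt f f' x) :
    HasDerivAt (‖f ·‖ ^ 2) (2 * (⟪f x, f'⟫_ℂ).re) x := by
  have hnorm : (‖f ·‖ ^ 2) = fun t => (⟪f t, f t⟫_ℂ).re :=
    funext fun t => (inner_self_eq_norm_sq (𝕜 := ℂ) (f t)).symm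
  have hsymm : (⟪f', f x⟫_ℂ).re = (⟪f x, f'⟫_ℂ).re := inner_re_symm (𝕜 := ℂ) _ _
  have hinner := Complex.reCLM.hasFDerivAt.comp_hasDerivAt x (hf.inner ℂ hf)
  rw [hnorm, two_mul]
  simpa only [Function.comp_def, Complex.reCLM_apply, Complex.add_re, hsymm] using hinner

theorem re_inner_neg_I_smul (x y : H) : (⟪x, (-Complex.I) • y⟫_ℂ).re = -(⟪y, x⟫_ℂ).im := by
  rw [inner_smul_right, ← inner_conj_symm x y]
  simp [-inner_conj_symm]

noncomputable def normSqPoly {n : ℕ} (a : Fin (n + 1) → H) : ℝ[X] :=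
  ∑ i, ∑ j, C (⟪a i, a j⟫_ℂ).re * X ^ ((i : ℕ) + j)

theorem eval_normSqPoly {n : ℕ} (a : Fin (n + 1) → H) (t : ℝ) :
    (normSqPoly a).eval t = ‖∑ i : Fin (n + 1), (t ^ (i : ℕ)) • a i‖ ^ 2 := by
  rw [← inner_self_eq_norm_sq (𝕜 := ℂ), sum_inner, normSqPoly]
  simp only [eval_finsetSum, eval_mul, eval_C, eval_pow, eval_X, inner_sum, map_sum]
  refine Finset.sum_congr rfl fun i _ => Finset.sum_congr rfl fun j _ => ?_
  rw [← Complex.coe_smul (t ^ (i : ℕ)), ← Complex.coe_smul (t ^ (j : ℕ)), inner_smul_left,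
    inner_smul_right, Complex.conj_ofReal, ← mul_assoc, ← Complex.ofReal_mul,
    RCLike.re_to_complex, Complex.re_ofReal_mul, pow_add, mul_comm]

theorem natDegree_normSqPoly_le {n : ℕ} (a : Fin (n + 1) → H) :
    (normSqPoly a).natDegree ≤ 2 * n :=
  natDegree_sum_le_of_forall_le _ _ fun i _ => natDegree_sum_le_of_forall_le _ _ fun j _ =>
    (natDegree_C_mul_X_pow_le _ _).trans (by omega)

end InnerProduct

theorem stmt_9_general {H : Type*} [NormedAddCommGroup H] [InnerProductSpace ℂ H]
    (s : ℕ) (b c : Fin s → ℝ)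
    (hquad : ∀ p : Polynomial ℝ, p.natDegree ≤ 2 * s - 1 →
      ∑ i, b i * p.eval (c i) = ∫ x in (0:ℝ)..1, p.eval x)
    (a : Fin (s + 1) → H) (u : ℝ → H)
    (hu : ∀ t : ℝ, u t = ∑ i : Fin (s + 1), (t ^ (i : ℕ)) • a i)
    (F : Fin s → H)
    (hnode : ∀ i, deriv u (c i) = (-Complex.I) • F i)
    (him : ∀ i, (⟪F i, u (c i)⟫_ℂ).im = 0) :
    ‖u 1‖ ^ 2 = ‖u 0‖ ^ 2 := by
  have hu_diff : Differentiable ℝ u := by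
    rw [funext hu]
    fun_prop
  have heval : ∀ t, (normSqPoly a).eval t = ‖u t‖ ^ 2 := fun t => by
    rw [eval_normSqPoly, hu]
  have hnodes : ∀ i, (normSqPoly a).derivative.eval (c i) = 0 := fun i => by
    rw [← Polynomial.deriv, funext heval, (hu_diff _).hasDerivAt.norm_sq_of_complex.deriv,
      hnode, re_inner_neg_I_smul, him, neg_zero, mul_zero]
  rw [← heval, ← heval]
  exact eval_one_eq_eval_zero_of_quadrature hquad (natDegree_normSqPoly_le a) hnodes

theorem stmt_9 {H : Type*} [NormedAddCommGroup H] [InnerProductSpace ℂ H]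
    [FiniteDimensional ℂ H]
    (s : ℕ) (hs : 1 ≤ s) (b c : Fin s → ℝ)
    (hquad : ∀ p : Polynomial ℝ, p.natDegree ≤ 2 * s - 1 →
      ∑ i, b i * p.eval (c i) = ∫ x in (0:ℝ)..1, p.eval x)
    (a : Fin (s + 1) → H) (u : ℝ → H)
    (hu : ∀ t : ℝ, u t = ∑ i : Fin (s + 1), (t ^ (i : ℕ)) • a i)
    (F : Fin s → H)
    (hnode : ∀ i, deriv u (c i) = (-Complex.I) • F i)
    (him : ∀ i, (⟪F i, u (c i)⟫_ℂ).im = 0) :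
    ‖u 1‖ ^ 2 = ‖u 0‖ ^ 2 :=
  stmt_9_general s b c hquad a u hu F hnode him
end

section
/- Let (b_i, c_i)_{i=1}^s be a quadrature rule on [0,1] exact for polynomials of degree ≤ 2s-1, H a finite-dimensional complex inner product space, L : H → H self-adjoint ℂ-linear, β ∈ ℝ, u : ℝ → H a polynomial of degree ≤ s, and v : ℝ → ℝ a polynomial of degree ≤ s. Suppose at each node c_i there exist F_i ∈ H and φ_i ∈ H with F_i = L u(c_i) + β v(c_i) φ_i, u'(c_i) = -i F_i, and v'(c_i) = 2 Re⟨u'(c_i), φ_i⟩. Then Re⟨L u(1), u(1)⟩ + (β/2) v(1)² = Re⟨L u(0), u(0)⟩ + (β/2) v(0)². -/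
open scoped InnerProductSpace

theorem stmt_10 {H : Type*} [NormedAddCommGroup H] [InnerProductSpace ℂ H]
    [FiniteDimensional ℂ H]
    (s : ℕ) (hs : 1 ≤ s) (b c : Fin s → ℝ)
    (hquad : ∀ p : Polynomial ℝ, p.natDegree ≤ 2 * s - 1 →
      ∑ i, b i * p.eval (c i) = ∫ x in (0:ℝ)..1, p.eval x)
    (L : H →ₗ[ℂ] H) (hL : ∀ u v : H, ⟪L u, v⟫_ℂ = ⟪u, L v⟫_ℂ)
    (β : ℝ)
    (a : Fin (s + 1) → H) (u : ℝ → H)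
    (hu : ∀ t : ℝ, u t = ∑ i : Fin (s + 1), (t ^ (i : ℕ)) • a i)
    (v : Polynomial ℝ) (hv : v.natDegree ≤ s)
    (F φ : Fin s → H)
    (hF : ∀ i, F i = L (u (c i)) + (β * v.eval (c i) : ℂ) • φ i)
    (hnode : ∀ i, deriv u (c i) = (-Complex.I) • F i)
    (hvnode : ∀ i, (Polynomial.derivative v).eval (c i) =
      2 * (⟪deriv u (c i), φ i⟫_ℂ).re) :
    (⟪L (u 1), u 1⟫_ℂ).re + β / 2 * v.eval 1 ^ 2 =
      (⟪L (u 0), u 0⟫_ℂ).re + β / 2 * v.eval 0 ^ 2 := by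
  classical
  -- derivative of u
  set u' : ℝ → H := fun t => ∑ i : Fin (s + 1), (((i : ℕ) : ℝ) * t ^ ((i : ℕ) - 1)) • a i
    with hu'def
  have huf : u = fun t => ∑ i : Fin (s + 1), (t ^ (i : ℕ)) • a i := funext hu
  have hder : ∀ t : ℝ, HasDerivAt u (u' t) t := by
    intro t
    rw [huf]
    exact HasDerivAt.fun_sum fun i _ => (hasDerivAt_pow (i : ℕ) t).smul_const (a i)
  have hderiv_u : ∀ t, deriv u t = u' t := fun t => (hder t).deriv
  -- derivative of L ∘ u
  have hLsum : ∀ t : ℝ, L (u t) = ∑ i : Fin (s + 1), (t ^ (i : ℕ)) • L (a i) := by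
    intro t
    rw [hu, map_sum]
    simp [LinearMap.map_smul_of_tower]
  have hLu' : ∀ t : ℝ, L (u' t) = ∑ i : Fin (s + 1),
      (((i : ℕ) : ℝ) * t ^ ((i : ℕ) - 1)) • L (a i) := by
    intro t
    rw [hu'def, map_sum]
    simp [LinearMap.map_smul_of_tower]
  have hderL : ∀ t : ℝ, HasDerivAt (fun t => L (u t)) (L (u' t)) t := by
    intro t
    rw [hLu']
    have : (fun t => L (u t)) = fun t => ∑ i : Fin (s + 1), (t ^ (i : ℕ)) • L (a i) :=
      funext hLsum
    rw [this]
    exact HasDerivAt.fun_sum fun i _ => (hasDerivAt_pow (i : ℕ) t).smul_const (L (a i))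
  -- derivative of the quadratic form
  have hQder : ∀ t : ℝ, HasDerivAt (fun t => (⟪L (u t), u t⟫_ℂ).re)
      ((⟪L (u t), u' t⟫_ℂ + ⟪L (u' t), u t⟫_ℂ).re) t := by
    intro t
    have h1 : HasDerivAt (fun t => ⟪L (u t), u t⟫_ℂ)
        (⟪L (u t), u' t⟫_ℂ + ⟪L (u' t), u t⟫_ℂ) t :=
      (hderL t).inner ℂ (hder t)
    exact (Complex.reCLM.hasFDerivAt.comp_hasDerivAt t h1)
  -- the polynomial representing the quadratic form
  set q : Polynomial ℝ := ∑ i : Fin (s + 1), ∑ j : Fin (s + 1),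
      Polynomial.C (⟪L (a i), a j⟫_ℂ).re * Polynomial.X ^ ((i : ℕ) + (j : ℕ)) with hqdef
  have hq : ∀ t : ℝ, q.eval t = (⟪L (u t), u t⟫_ℂ).re := by
    intro t
    rw [hqdef, hLsum, hu]
    rw [sum_inner]
    simp only [Polynomial.eval_finset_sum, Polynomial.eval_mul, Polynomial.eval_C,
      Polynomial.eval_pow, Polynomial.eval_X, Complex.re_sum]
    refine Finset.sum_congr rfl fun i _ => ?_
    rw [inner_sum, Complex.re_sum]
    refine Finset.sum_congr rfl fun j _ => ?_
    rw [← Complex.coe_smul (t ^ (i : ℕ)) (L (a i)), ← Complex.coe_smul (t ^ (j : ℕ)) (a j),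
      inner_smul_left, inner_smul_right]
    rw [Complex.conj_ofReal, ← mul_assoc, ← Complex.ofReal_mul, Complex.re_ofReal_mul, pow_add]
    ring
  -- the full energy polynomial
  set g : Polynomial ℝ := q + Polynomial.C (β / 2) * v ^ 2 with hgdef
  have hg : ∀ t : ℝ, g.eval t = (⟪L (u t), u t⟫_ℂ).re + β / 2 * v.eval t ^ 2 := by
    intro t
    simp [hgdef, hq t]
  -- degree bounds
  have hqdeg : q.natDegree ≤ 2 * s := by
    refine Polynomial.natDegree_sum_le_of_forall_le _ _ fun i _ => ?_
    refine Polynomial.natDegree_sum_le_of_forall_le _ _ fun j _ => ?_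
    refine (Polynomial.natDegree_C_mul_le _ _).trans ?_
    rw [Polynomial.natDegree_X_pow]
    have hi : (i : ℕ) ≤ s := Nat.lt_succ_iff.mp i.isLt
    have hj : (j : ℕ) ≤ s := Nat.lt_succ_iff.mp j.isLt
    omega
  have hgdeg : g.natDegree ≤ 2 * s := by
    refine (Polynomial.natDegree_add_le _ _).trans (max_le hqdeg ?_)
    refine (Polynomial.natDegree_C_mul_le _ _).trans ?_
    rw [Polynomial.natDegree_pow]
    omega
  have hgderdeg : (Polynomial.derivative g).natDegree ≤ 2 * s - 1 :=
    (Polynomial.natDegree_derivative_le g).trans (by omega)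
  -- derivative of g matches the analytic derivative
  have hgder : ∀ t : ℝ, (Polynomial.derivative g).eval t =
      (⟪L (u t), u' t⟫_ℂ + ⟪L (u' t), u t⟫_ℂ).re
        + β / 2 * (2 * v.eval t * (Polynomial.derivative v).eval t) := by
    intro t
    have hd : HasDerivAt (fun t => g.eval t) ((Polynomial.derivative g).eval t) t :=
      g.hasDerivAt t
    have hd2 : HasDerivAt (fun t => g.eval t)
        ((⟪L (u t), u' t⟫_ℂ + ⟪L (u' t), u t⟫_ℂ).re
          + β / 2 * (2 * v.eval t * (Polynomial.derivative v).eval t)) t := by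
      have hfe : (fun t => g.eval t)
          = fun t => (⟪L (u t), u t⟫_ℂ).re + β / 2 * v.eval t ^ 2 := funext hg
      rw [hfe]
      have hv2 : HasDerivAt (fun t => β / 2 * v.eval t ^ 2)
          (β / 2 * (2 * v.eval t * (Polynomial.derivative v).eval t)) t := by
        have := ((v.hasDerivAt t).pow 2).const_mul (β / 2)
        simpa [mul_comm, mul_assoc, mul_left_comm] using this
      exact (hQder t).add hv2
    exact hd.unique hd2
  -- the derivative vanishes at the nodes
  have hnodes : ∀ i : Fin s, (Polynomial.derivative g).eval (c i) = 0 := by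
    intro i
    rw [hgder]
    have hu'c : u' (c i) = (-Complex.I) • F i := by rw [← hderiv_u, hnode]
    -- Re⟪L u', u⟫ = Re⟪L u, u'⟫
    have hsym : (⟪L (u' (c i)), u (c i)⟫_ℂ).re = (⟪L (u (c i)), u' (c i)⟫_ℂ).re := by
      rw [hL, ← inner_conj_symm, Complex.conj_re]
    have hre : (⟪L (u (c i)), u' (c i)⟫_ℂ + ⟪L (u' (c i)), u (c i)⟫_ℂ).re
        = 2 * (⟪L (u (c i)), u' (c i)⟫_ℂ).re := by
      rw [Complex.add_re, hsym]; ring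
    rw [hre, hvnode, hderiv_u]
    -- β/2 * (2 * v * (2 Re⟪u', φ⟫)) = 2 Re⟪βvφ, u'⟫
    have hφ : β / 2 * (2 * v.eval (c i) * (2 * (⟪u' (c i), φ i⟫_ℂ).re))
        = 2 * (⟪((β * v.eval (c i) : ℝ) : ℂ) • φ i, u' (c i)⟫_ℂ).re := by
      rw [inner_smul_left, Complex.conj_ofReal, Complex.re_ofReal_mul,
        ← inner_conj_symm (u' (c i)) (φ i)]
      simp only [Complex.conj_re]
      ring
    rw [hφ, ← mul_add, ← Complex.add_re, ← inner_add_left]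
    have hFi : L (u (c i)) + ((β * v.eval (c i) : ℝ) : ℂ) • φ i = F i := by
      rw [hF i]; norm_num
    rw [hFi, hu'c, inner_smul_right, inner_self_eq_norm_sq_to_K]
    simp [← Complex.ofReal_pow]
  -- quadrature + FTC
  have hint : ∫ x in (0:ℝ)..1, (Polynomial.derivative g).eval x = g.eval 1 - g.eval 0 := by
    have hdfun : deriv (fun x => g.eval x) = fun x => (Polynomial.derivative g).eval x :=
      funext fun x => g.deriv
    refine intervalIntegral.integral_deriv_eq_sub' _ hdfun
      (fun x _ => (g.hasDerivAt x).differentiableAt) ?_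
    exact ((Polynomial.derivative g).continuous).continuousOn
  have hzero : g.eval 1 - g.eval 0 = 0 := by
    rw [← hint, ← hquad _ hgderdeg]
    simp [hnodes]
  have := hg 1 ▸ hg 0 ▸ hzero
  linarith [hzero, hg 1, hg 0]
end
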